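/- (Assouad-type lower bound) Let (𝒳,𝒜) be a measurable space and let {P_ω : ω ∈ Ω}, Ω = {0,1}^m, be probability measures on (𝒳,𝒜), all absolutely continuous with respect to a common σ-finite measure μ. For ω, ω′ ∈ Ω let H²(P_ω, P_ω′) = ∫ (√(dP_ω/dμ) − √(dP_ω′/dμ))² dμ denote the squared Hellinger distance, and let ρ be the Hamming distance on Ω. Assume there is α < 2 such that H²(P_ω, P_ω′) ≤ α whenever ρ(ω, ω′) = 1. Then for every family of measurable estimators ŵ = (ŵ₁,…,ŵ_m) with ŵ_j : 𝒳 → [0,1], max_{ω∈Ω} E_ω[ ∑_{j=1}^m |ŵ_j − ω_j| ] ≥ (m/4)(1 − α/2)², where E_ω denotes expectation under P_ω. -/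

import Mathlib

open MeasureTheory
open scoped ENNReal NNReal

noncomputable section

namespace AggClass

variable {X : Type*} [MeasurableSpace X]

/-- The sign function, with the convention `sgn 0 = 1`. -/
def sgn (t : ℝ) : ℝ := if 0 ≤ t then 1 else -1

/-- The Bayes rule `f*(x) = sign (2 η x - 1)`. -/
def bayes (η : X → ℝ) : X → ℝ := fun x => sgn (2 * η x - 1)

/-- The hinge risk `A(f) = E[max (1 - Y f(X)) 0]`, as an extended nonnegative real. -/
def hingeRiskE (π : Measure (X × ℝ)) (f : X → ℝ) : ℝ≥0∞ :=
  ∫⁻ p, ENNReal.ofReal (max (1 - p.2 * f p.1) 0) ∂π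

/-- The optimal hinge risk `A* = inf {A(f) : f : X → ℝ measurable}`. -/
def optHingeRiskE (π : Measure (X × ℝ)) : ℝ≥0∞ :=
  ⨅ (f : X → ℝ) (_ : Measurable f), hingeRiskE π f

/-- The hinge risk, real-valued. -/
def hingeRisk (π : Measure (X × ℝ)) (f : X → ℝ) : ℝ := (hingeRiskE π f).toReal

/-- The optimal hinge risk, real-valued. -/
def optHingeRisk (π : Measure (X × ℝ)) : ℝ := (optHingeRiskE π).toReal

/-- The misclassification risk `R(f) = π (Y ≠ sign (f X))`, ℝ≥0∞-valued. -/
def misRiskE (π : Measure (X × ℝ)) (f : X → ℝ) : ℝ≥0∞ :=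
  π {p : X × ℝ | p.2 ≠ sgn (f p.1)}

/-- The misclassification risk, real-valued. -/
def misRisk (π : Measure (X × ℝ)) (f : X → ℝ) : ℝ := (misRiskE π f).toReal

/-- `π` is a joint law of a pair (X,Y) on `X × {-1,1}` with regression function
`η x = π(Y = 1 ∣ X = x)`. -/
structure IsClassif (π : Measure (X × ℝ)) (η : X → ℝ) : Prop where
  labels : π {p : X × ℝ | p.2 = 1 ∨ p.2 = -1}ᶜ = 0
  meas : Measurable η
  mem01 : ∀ x, η x ∈ Set.Icc (0 : ℝ) 1
  cond : ∀ B : Set X, MeasurableSet B →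
    π (B ×ˢ ({1} : Set ℝ)) = ∫⁻ x in B, ENNReal.ofReal (η x) ∂(π.map Prod.fst)

/-- Margin assumption MA(κ) with constant c₀ : for every measurable prediction rule
`f : X → {-1,1}`, `E[|f(X) - f*(X)|] ≤ c₀ (R(f) - R*)^(1/κ)`. -/
def MA (π : Measure (X × ℝ)) (η : X → ℝ) (κ c₀ : ℝ) : Prop :=
  ∀ f : X → ℝ, Measurable f → (∀ x, f x = 1 ∨ f x = -1) →
    ∫ x, |f x - bayes η x| ∂(π.map Prod.fst)
      ≤ c₀ * (misRisk π f - misRisk π (bayes η)) ^ (1 / κ)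

/-- Margin assumption for the hinge risk MAH(κ) with constant c : for every measurable
`f : X → [-1,1]`, `E[|f(X) - f*(X)|] ≤ c (A(f) - A*)^(1/κ)`. -/
def MAH (π : Measure (X × ℝ)) (η : X → ℝ) (κ c : ℝ) : Prop :=
  ∀ f : X → ℝ, Measurable f → (∀ x, f x ∈ Set.Icc (-1 : ℝ) 1) →
    ∫ x, |f x - bayes η x| ∂(π.map Prod.fst)
      ≤ c * (hingeRisk π f - optHingeRisk π) ^ (1 / κ)

/-- Convex combination of f₁,…,f_M with weights w. -/
def convComb {M : ℕ} (f : Fin M → X → ℝ) (w : Fin M → ℝ) : X → ℝ :=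
  fun x => ∑ j, w j * f j x

/-- The set of hinge risks of the elements of the convex hull of f₁,…,f_M. -/
def convRiskSet (π : Measure (X × ℝ)) {M : ℕ} (f : Fin M → X → ℝ) : Set ℝ :=
  {a | ∃ w : Fin M → ℝ, (∀ j, 0 ≤ w j) ∧ (∑ j, w j) = 1 ∧ a = hingeRisk π (convComb f w)}

/-- The law of an i.i.d. sample of size n from π. -/
def sample {α : Type*} [MeasurableSpace α] (π : Measure α) [SigmaFinite π] (n : ℕ) :
    Measure (Fin n → α) :=
  Measure.pi fun _ => π

/-- The empirical hinge risk on the sample D. -/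
def empHinge {n : ℕ} (D : Fin n → X × ℝ) (f : X → ℝ) : ℝ :=
  (n : ℝ)⁻¹ * ∑ i, max (1 - (D i).2 * f (D i).1) 0

/-- The empirical misclassification risk on the sample D. -/
def empMis {n : ℕ} (D : Fin n → X × ℝ) (f : X → ℝ) : ℝ :=
  (n : ℝ)⁻¹ * ∑ i, if (D i).2 ≠ f (D i).1 then (1 : ℝ) else 0

/-- The set of indices minimizing the empirical hinge risk. -/
def ermSet {n M : ℕ} (f : Fin M → X → ℝ) (D : Fin n → X × ℝ) : Finset (Fin M) :=
  Finset.univ.filter fun j => ∀ k, empHinge D (f j) ≤ empHinge D (f k)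

/-- `tf` is an empirical risk minimization (ERM) aggregate for the hinge loss. -/
def IsERM {n M : ℕ} (f : Fin M → X → ℝ) (tf : (Fin n → X × ℝ) → X → ℝ) : Prop :=
  ∀ D, ∃ j ∈ ermSet f D, tf D = f j

/-- `tf` is the averaged ERM (AERM) aggregate for the hinge loss. -/
def IsAERM {n M : ℕ} (f : Fin M → X → ℝ) (tf : (Fin n → X × ℝ) → X → ℝ) : Prop :=
  ∀ D, tf D = fun x => ((ermSet f D).card : ℝ)⁻¹ * ∑ j ∈ ermSet f D, f j x

/-- The exponential weights for the hinge loss. -/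
def aewWeight {n M : ℕ} (f : Fin M → X → ℝ) (D : Fin n → X × ℝ) (j : Fin M) : ℝ :=
  Real.exp (-(n : ℝ) * empHinge D (f j)) / ∑ k, Real.exp (-(n : ℝ) * empHinge D (f k))

/-- `tf` is the aggregation-with-exponential-weights (AEW) aggregate for the hinge loss. -/
def IsAEW {n M : ℕ} (f : Fin M → X → ℝ) (tf : (Fin n → X × ℝ) → X → ℝ) : Prop :=
  ∀ D, tf D = fun x => ∑ j, aewWeight f D j * f j x

/-- Empirical hinge risk on the first k observations of the sample D. -/
def empHingeK {n : ℕ} (D : Fin n → X × ℝ) (k : ℕ) (f : X → ℝ) : ℝ :=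
  (k : ℝ)⁻¹ * ∑ i ∈ Finset.univ.filter (fun i : Fin n => (i : ℕ) < k),
    max (1 - (D i).2 * f (D i).1) 0

/-- The cumulative exponential weights for the hinge loss. -/
def caewWeight {n M : ℕ} (f : Fin M → X → ℝ) (D : Fin n → X × ℝ) (j : Fin M) : ℝ :=
  (n : ℝ)⁻¹ * ∑ k ∈ Finset.Icc 1 n,
    Real.exp (-(k : ℝ) * empHingeK D k (f j)) /
      ∑ l, Real.exp (-(k : ℝ) * empHingeK D k (f l))

/-! For two vertices `ω, ω'` of the cube differing only in coordinate `j`, Le Cam's two-point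
bound gives `E_ω |ŵ_j - ω_j| + E_ω' |ŵ_j - ω'_j| ≥ ∫ min(p_ω, p_ω') dμ ≥ (∫ √(p_ω p_ω'))² / 2`,
the last step being Cauchy–Schwarz for `√min · √max` together with `∫ max ≤ 2`. The Hellinger
affinity `∫ √(p_ω p_ω')` equals `1 - H²/2 ≥ 1 - α/2`. Pairing each vertex with its neighbour
across coordinate `j` and summing over the cube and over `j` shows that the average over `ω` of
the risk is at least `(m/4)(1 - α/2)²`, hence so is its maximum. -/

section Densities

variable {μ : Measure X} {p q : X → ℝ}

theorem integrable_sqrt_mul (hp0 : 0 ≤ p) (hq0 : 0 ≤ q) (hp : Integrable p μ)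
    (hq : Integrable q μ) : Integrable (fun x => √(p x * q x)) μ := by
  refine (hp.add hq).mono' ?_ (ae_of_all _ fun x => ?_)
  · exact Real.continuous_sqrt.comp_aestronglyMeasurable
      (hp.aestronglyMeasurable.mul hq.aestronglyMeasurable)
  · have hpx : 0 ≤ p x := hp0 x
    have hqx : 0 ≤ q x := hq0 x
    rw [Real.norm_of_nonneg (Real.sqrt_nonneg _), Pi.add_apply]
    exact Real.sqrt_le_iff.mpr ⟨by positivity, by nlinarith⟩

theorem sq_integral_sqrt_mul_le (hp0 : 0 ≤ p) (hq0 : 0 ≤ q) (hp : Integrable p μ)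
    (hq : Integrable q μ) :
    (∫ x, √(p x * q x) ∂μ) ^ 2 ≤ (∫ x, p x ∂μ) * ∫ x, q x ∂μ := by
  have memLp_sqrt : ∀ {f : X → ℝ}, 0 ≤ f → Integrable f μ →
      MemLp (fun x => √(f x)) (ENNReal.ofReal 2) μ := fun {f} hf0 hf => by
    rw [ENNReal.ofReal_ofNat, memLp_two_iff_integrable_sq
      (Real.continuous_sqrt.comp_aestronglyMeasurable hf.aestronglyMeasurable)]
    exact hf.congr (ae_of_all _ fun x => (Real.sq_sqrt (hf0 x)).symm)
  have hCS := integral_mul_le_Lp_mul_Lq_of_nonneg Real.HolderConjugate.two_two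
    (ae_of_all _ fun x => Real.sqrt_nonneg (p x)) (ae_of_all _ fun x => Real.sqrt_nonneg (q x))
    (memLp_sqrt hp0 hp) (memLp_sqrt hq0 hq)
  simp only [← Real.sqrt_mul (hp0 _), Real.rpow_two, Real.sq_sqrt (hp0 _),
    Real.sq_sqrt (hq0 _), ← Real.sqrt_eq_rpow] at hCS
  calc (∫ x, √(p x * q x) ∂μ) ^ 2
      ≤ (√(∫ x, p x ∂μ) * √(∫ x, q x ∂μ)) ^ 2 :=
        pow_le_pow_left₀ (integral_nonneg fun x => Real.sqrt_nonneg _) hCS 2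
    _ = (∫ x, p x ∂μ) * ∫ x, q x ∂μ := by
        rw [mul_pow, Real.sq_sqrt (integral_nonneg hp0), Real.sq_sqrt (integral_nonneg hq0)]

section ProbabilityDensities

variable (hp0 : 0 ≤ p) (hq0 : 0 ≤ q) (hp : Integrable p μ) (hq : Integrable q μ)
  (hp1 : ∫ x, p x ∂μ = 1) (hq1 : ∫ x, q x ∂μ = 1)
include hp0 hq0 hp hq hp1 hq1

theorem integral_sq_sub_sqrt_eq :
    ∫ x, (√(p x) - √(q x)) ^ 2 ∂μ = 2 - 2 * ∫ x, √(p x * q x) ∂μ := by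
  have expand : ∀ x, (√(p x) - √(q x)) ^ 2 = p x + q x - 2 * √(p x * q x) := fun x => by
    rw [sub_sq, Real.sq_sqrt (hp0 x), Real.sq_sqrt (hq0 x), Real.sqrt_mul (hp0 x)]
    ring
  simp only [expand]
  rw [integral_sub (f := fun x => p x + q x) (hp.add hq)
      ((integrable_sqrt_mul hp0 hq0 hp hq).const_mul 2),
    integral_add hp hq, integral_const_mul, hp1, hq1]
  ring

theorem sq_integral_sqrt_mul_le_two_mul_integral_min :
    (∫ x, √(p x * q x) ∂μ) ^ 2 ≤ 2 * ∫ x, min (p x) (q x) ∂μ := by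
  have hmin : Integrable (fun x => min (p x) (q x)) μ := hp.inf hq
  have hmax : Integrable (fun x => max (p x) (q x)) μ := hp.sup hq
  have integral_min_add_max :
      (∫ x, min (p x) (q x) ∂μ) + ∫ x, max (p x) (q x) ∂μ = 2 := by
    rw [← integral_add hmin hmax]
    simp only [min_add_max]
    rw [integral_add hp hq, hp1, hq1]
    norm_num
  have hCS := sq_integral_sqrt_mul_le (fun x => le_min (hp0 x) (hq0 x))
    (fun x => (hp0 x).trans (le_max_left _ _)) hmin hmax
  simp only [min_mul_max] at hCS
  nlinarith [integral_nonneg (μ := μ) fun x => le_min (hp0 x) (hq0 x)]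

end ProbabilityDensities

theorem integral_min_le_integral_mul_add_integral_mul_one_sub (hp : Integrable p μ)
    (hq : Integrable q μ) {f : X → ℝ}
    (hf : AEStronglyMeasurable f μ) (hf01 : ∀ x, f x ∈ Set.Icc (0 : ℝ) 1) :
    ∫ x, min (p x) (q x) ∂μ ≤ (∫ x, p x * f x ∂μ) + ∫ x, q x * (1 - f x) ∂μ := by
  have hf_bound : ∀ᵐ x ∂μ, ‖f x‖ ≤ 1 := ae_of_all _ fun x => by
    rw [Real.norm_of_nonneg (hf01 x).1]; exact (hf01 x).2
  have hg_bound : ∀ᵐ x ∂μ, ‖1 - f x‖ ≤ 1 := ae_of_all _ fun x => by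
    rw [Real.norm_of_nonneg (sub_nonneg.2 (hf01 x).2)]; linarith [(hf01 x).1]
  have hpf := hp.mul_bdd hf hf_bound
  have hqg := hq.mul_bdd (g := fun x => 1 - f x) (aestronglyMeasurable_const.sub hf) hg_bound
  rw [← integral_add hpf hqg]
  refine integral_mono (hp.inf hq) (hpf.add hqg) fun x => ?_
  have := hf01 x
  nlinarith [min_le_left (p x) (q x), min_le_right (p x) (q x), this.1, this.2]

end Densities

theorem two_point_lower_bound {μ : Measure X} [SigmaFinite μ] {P Q : Measure X}
    [IsProbabilityMeasure P] [IsProbabilityMeasure Q] (hP : P ≪ μ) (hQ : Q ≪ μ)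
    {α : ℝ} (hα : α < 2)
    (hH : ∫ x, (√((P.rnDeriv μ x).toReal) - √((Q.rnDeriv μ x).toReal)) ^ 2 ∂μ ≤ α)
    {f : X → ℝ} (hf : Measurable f) (hf01 : ∀ x, f x ∈ Set.Icc (0 : ℝ) 1) :
    (1 - α / 2) ^ 2 / 2 ≤ (∫ x, f x ∂P) + ∫ x, (1 - f x) ∂Q := by
  set p : X → ℝ := fun x => (P.rnDeriv μ x).toReal
  set q : X → ℝ := fun x => (Q.rnDeriv μ x).toReal
  have hp0 : 0 ≤ p := fun x => ENNReal.toReal_nonneg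
  have hq0 : 0 ≤ q := fun x => ENNReal.toReal_nonneg
  have hp : Integrable p μ := Measure.integrable_toReal_rnDeriv
  have hq : Integrable q μ := Measure.integrable_toReal_rnDeriv
  have hp1 : ∫ x, p x ∂μ = 1 := by simp [p, Measure.integral_toReal_rnDeriv hP]
  have hq1 : ∫ x, q x ∂μ = 1 := by simp [q, Measure.integral_toReal_rnDeriv hQ]
  have affinity_ge : 1 - α / 2 ≤ ∫ x, √(p x * q x) ∂μ := by
    rw [integral_sq_sub_sqrt_eq hp0 hq0 hp hq hp1 hq1] at hH
    linarith
  rw [← integral_toReal_rnDeriv_mul hP, ← integral_toReal_rnDeriv_mul hQ]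
  calc (1 - α / 2) ^ 2 / 2 ≤ (∫ x, √(p x * q x) ∂μ) ^ 2 / 2 := by gcongr; linarith
    _ ≤ ∫ x, min (p x) (q x) ∂μ := by
      linarith [sq_integral_sqrt_mul_le_two_mul_integral_min hp0 hq0 hp hq hp1 hq1]
    _ ≤ _ := integral_min_le_integral_mul_add_integral_mul_one_sub hp hq
      hf.aestronglyMeasurable hf01

theorem card_filter_update_ne_update {ι β : Type*} [Fintype ι] [DecidableEq ι] [DecidableEq β]
    (ω : ι → β) (j : ι) {a b : β} (hab : a ≠ b) :
    (Finset.univ.filter fun k => Function.update ω j a k ≠ Function.update ω j b k).card = 1 :=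
  Finset.card_eq_one.2 ⟨j, by ext k; by_cases hk : k = j <;> simp [hk, hab]⟩

theorem exists_le_sum_of_le_update_add_update {ι : Type*} [Fintype ι] [DecidableEq ι]
    (g : (ι → Bool) → ι → ℝ) (c : ℝ)
    (h : ∀ ω j, c ≤ g (Function.update ω j false) j + g (Function.update ω j true) j) :
    ∃ ω, Fintype.card ι * c / 2 ≤ ∑ j, g ω j := by
  have slice : ∀ j, 2 ^ Fintype.card ι * c ≤ 2 * ∑ ω, g ω j := by
    intro j
    let flip : (ι → Bool) → ι → Bool := fun ω => Function.update ω j (!ω j)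
    have flip_involutive : Function.Involutive flip := fun ω => by simp [flip]
    have pair : ∀ ω, g (Function.update ω j false) j + g (Function.update ω j true) j
        = g ω j + g (flip ω) j := by
      intro ω
      have self : Function.update ω j (ω j) = ω := Function.update_eq_self j ω
      cases hω : ω j <;> rw [hω] at self <;> simp [flip, hω, self, add_comm]
    calc (2 : ℝ) ^ Fintype.card ι * c = ∑ _ω : ι → Bool, c := by simp
      _ ≤ ∑ ω, (g (Function.update ω j false) j + g (Function.update ω j true) j) :=
        Finset.sum_le_sum fun ω _ => h ω j
      _ = 2 * ∑ ω, g ω j := by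
        rw [Finset.sum_congr rfl fun ω _ => pair ω, Finset.sum_add_distrib,
          Fintype.sum_bijective flip flip_involutive.bijective (fun ω => g (flip ω) j)
            (fun ω => g ω j) fun _ => rfl]
        ring
  have total : ∑ _ω : ι → Bool, (Fintype.card ι * c / 2) ≤ ∑ ω, ∑ j, g ω j := by
    rw [Finset.sum_comm]
    calc ∑ _ω : ι → Bool, (Fintype.card ι * c / 2)
        = ∑ _j : ι, (2 : ℝ) ^ Fintype.card ι * c / 2 := by simp; ring
      _ ≤ ∑ j, ∑ ω, g ω j := Finset.sum_le_sum fun j _ => by linarith [slice j]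
  obtain ⟨ω, -, hω⟩ := Finset.exists_le_of_sum_le Finset.univ_nonempty total
  exact ⟨ω, hω⟩

/-- Assouad-type lower bound: if the measures indexed by the cube are
pairwise close in Hellinger distance at Hamming distance 1, no estimator valued in
[0,1]^m estimates the vertex well. -/
theorem assouad_lower_bound
    {X : Type*} [MeasurableSpace X] (m : ℕ)
    (μ : Measure X) [SigmaFinite μ]
    (P : (Fin m → Bool) → Measure X) (hP : ∀ ω, IsProbabilityMeasure (P ω))
    (hac : ∀ ω, P ω ≪ μ)
    (α : ℝ) (hα : α < 2)
    (hH : ∀ ω ω' : Fin m → Bool,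
      (Finset.univ.filter fun j => ω j ≠ ω' j).card = 1 →
      ∫ x, (Real.sqrt (((P ω).rnDeriv μ x).toReal)
            - Real.sqrt (((P ω').rnDeriv μ x).toReal)) ^ 2 ∂μ ≤ α)
    (w : Fin m → X → ℝ) (hw : ∀ j, Measurable (w j))
    (hw01 : ∀ j x, w j x ∈ Set.Icc (0 : ℝ) 1) :
    ∃ ω : Fin m → Bool,
      (m : ℝ) / 4 * (1 - α / 2) ^ 2
        ≤ ∫ x, ∑ j, |w j x - (if ω j then 1 else 0)| ∂(P ω) := by
  set risk : (Fin m → Bool) → Fin m → ℝ :=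
    fun ω j => ∫ x, |w j x - (if ω j then 1 else 0)| ∂(P ω)
  have pair : ∀ ω j, (1 - α / 2) ^ 2 / 2
      ≤ risk (Function.update ω j false) j + risk (Function.update ω j true) j := by
    intro ω j
    have := hP (Function.update ω j false)
    have := hP (Function.update ω j true)
    convert two_point_lower_bound (hac _) (hac _) hα
      (hH _ _ (card_filter_update_ne_update ω j Bool.false_ne_true)) (hw j) (hw01 j) using 2
      <;> refine integral_congr_ae (ae_of_all _ fun x => ?_)
    · simp [abs_of_nonneg (hw01 j x).1]
    · simp [abs_of_nonpos (sub_nonpos.2 (hw01 j x).2)]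
  obtain ⟨ω, hω⟩ := exists_le_sum_of_le_update_add_update risk _ pair
  refine ⟨ω, ?_⟩
  have := hP ω
  have integrable_loss : ∀ j,
      Integrable (fun x => |w j x - (if ω j then 1 else 0)|) (P ω) := fun j =>
    Integrable.of_bound ((hw j).sub measurable_const).abs.aestronglyMeasurable 1
      (ae_of_all _ fun x => by
        simpa [← Real.dist_eq] using Real.dist_le_of_mem_Icc_01 (hw01 j x)
          (by split_ifs <;> norm_num : (if ω j then 1 else 0 : ℝ) ∈ Set.Icc 0 1))
  rw [integral_finsetSum _ fun j _ => integrable_loss j]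
  simp only [Fintype.card_fin] at hω
  linarith

end AggClass
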